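/- Let d and p be nonnegative integers with d ≥ 1, and let m ≥ 3 and n ≥ 3 be integers. If n ≡ 2d (mod 2d+1) and m ≤ 4d² + 2d, then γ_d^p(C_m ⊠ C_n) = γ_d^p(C_m) · γ_d^p(C_n) (in ℕ ∪ {∞}). -/

import Mathlib

open SimpleGraph

/-- The strong product `G ⊠ H` of two simple graphs. -/
def strongProd {α β : Type*} (G : SimpleGraph α) (H : SimpleGraph β) :
    SimpleGraph (α × β) where
  Adj x y := (G.Adj x.1 y.1 ∧ x.2 = y.2) ∨ (x.1 = y.1 ∧ H.Adj x.2 y.2) ∨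
    (G.Adj x.1 y.1 ∧ H.Adj x.2 y.2)
  symm := by
    constructor
    rintro ⟨a, b⟩ ⟨c, e⟩ (⟨h1, h2⟩ | ⟨h1, h2⟩ | ⟨h1, h2⟩)
    · exact Or.inl ⟨h1.symm, h2.symm⟩
    · exact Or.inr (Or.inl ⟨h1.symm, h2.symm⟩)
    · exact Or.inr (Or.inr ⟨h1.symm, h2.symm⟩)
  loopless := by
    constructor
    rintro ⟨a, b⟩ (⟨h1, _⟩ | ⟨_, h2⟩ | ⟨h1, _⟩)
    · exact G.irrefl h1
    · exact H.irrefl h2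
    · exact G.irrefl h1

/-- `S` is a `d`-distance dominating set of `G`: every vertex is within distance `d`
of some vertex of `S`. -/
def IsDistDomSet {V : Type*} (G : SimpleGraph V) (d : ℕ) (S : Finset V) : Prop :=
  ∀ v : V, ∃ u ∈ S, G.dist u v ≤ d

/-- `S` is a `p`-packing of `G`: distinct vertices of `S` are at distance at least `p + 1`. -/
def IsPacking {V : Type*} (G : SimpleGraph V) (p : ℕ) (S : Finset V) : Prop :=
  ∀ x ∈ S, ∀ y ∈ S, x ≠ y → p + 1 ≤ G.dist x y

/-- The `d`-distance `p`-packing domination number `γ_d^p(G)`, an element of `ℕ∞`,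
equal to `⊤` if no `d`-distance dominating `p`-packing exists. -/
noncomputable def distPackDomNum {V : Type*} (G : SimpleGraph V) (d p : ℕ) : ℕ∞ :=
  sInf {n : ℕ∞ | ∃ S : Finset V, n = S.card ∧ IsDistDomSet G d S ∧ IsPacking G p S}

/-- The radius of a graph: the least `k` such that some vertex is within
distance `k` of all vertices. -/
noncomputable def graphRadius {V : Type*} (G : SimpleGraph V) : ℕ :=
  sInf {k : ℕ | ∃ u : V, ∀ v : V, G.dist u v ≤ k}

/-! ### Auxiliary development -/

open Finset
open Fin.NatCast
open Fin.CommRing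

section CyclicDistance

lemma vsub_eq {m : ℕ} (a b : Fin m) :
    (a - b).val = if b.val ≤ a.val then a.val - b.val else a.val + m - b.val := by
  rw [Fin.sub_def]
  simp only []
  have hb := b.isLt
  rcases le_or_gt b.val a.val with h | h
  · rw [if_pos h]
    have : m - b.val + a.val = (a.val - b.val) + m := by omega
    rw [this, Nat.add_mod_right, Nat.mod_eq_of_lt (by omega)]
  · rw [if_neg (by omega), Nat.mod_eq_of_lt (by omega)]
    omega

/-- cyclic distance on `Fin m` -/
def cdist (m : ℕ) (i j : Fin m) : ℕ := min (j - i).val (i - j).val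

lemma cdist_self {m : ℕ} (i : Fin m) : cdist m i i = 0 := by
  simp [cdist, vsub_eq]

lemma cdist_comm' {m : ℕ} (i j : Fin m) : cdist m i j = cdist m j i := min_comm _ _

lemma cdist_eq' {m : ℕ} (i j : Fin m) :
    cdist m i j = if i.val ≤ j.val then min (j.val - i.val) (i.val + m - j.val)
      else min (j.val + m - i.val) (i.val - j.val) := by
  have hi := i.isLt; have hj := j.isLt
  rw [cdist, vsub_eq, vsub_eq]
  simp only [Nat.min_def]
  split_ifs <;> omega

lemma cdist_le_half' {m : ℕ} (i j : Fin m) : cdist m i j ≤ m / 2 := by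
  have hi := i.isLt; have hj := j.isLt
  rw [cdist_eq']; split <;> omega

lemma cycConn {m : ℕ} (hm : 3 ≤ m) : (cycleGraph m).Connected := by
  obtain ⟨M, rfl⟩ : ∃ M, m = M + 1 := ⟨m - 1, by omega⟩
  exact cycleGraph_connected

lemma cdist_step {m : ℕ} (hm : 3 ≤ m) {i u v : Fin m} (h : (cycleGraph m).Adj u v) :
    cdist m i v ≤ cdist m i u + 1 := by
  rw [cycleGraph_adj', vsub_eq, vsub_eq] at h
  have hi := i.isLt; have hu := u.isLt; have hv := v.isLt
  rw [cdist, cdist, vsub_eq, vsub_eq, vsub_eq, vsub_eq]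
  simp only [Nat.min_def]
  split_ifs at h ⊢ <;> omega

lemma cdist_le_walk {m : ℕ} (hm : 3 ≤ m) (i : Fin m) :
    ∀ {u v : Fin m} (_W : (cycleGraph m).Walk u v), cdist m i v ≤ cdist m i u + _W.length := by
  intro u v W
  induction W with
  | nil => simp
  | cons h q ih =>
    calc cdist m i _ ≤ cdist m i _ + q.length := ih
      _ ≤ (cdist m i _ + 1) + q.length := Nat.add_le_add_right (cdist_step hm h) _
      _ = _ := by simp [Walk.length_cons]; ring

lemma dist_le_vsub {m : ℕ} (hm : 3 ≤ m) (i j : Fin m) :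
    (cycleGraph m).dist i j ≤ (j - i).val := by
  haveI : NeZero m := ⟨by omega⟩
  have key : ∀ k : ℕ, (cycleGraph m).dist i (i + (k : Fin m)) ≤ k := by
    intro k
    induction k with
    | zero => simp [SimpleGraph.dist_self]
    | succ k ih =>
      have hadj : (cycleGraph m).Adj (i + (k : Fin m)) (i + ((k+1 : ℕ) : Fin m)) := by
        rw [cycleGraph_adj']
        right
        have : (i + ((k+1 : ℕ) : Fin m)) - (i + (k : Fin m)) = 1 := by
          push_cast; ring
        rw [this, Fin.val_one' m]
        exact Nat.mod_eq_of_lt (by omega)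
      calc (cycleGraph m).dist i (i + ((k+1:ℕ) : Fin m))
          ≤ (cycleGraph m).dist i (i + (k : Fin m))
            + (cycleGraph m).dist (i + (k : Fin m)) (i + ((k+1:ℕ) : Fin m)) :=
            (cycConn hm).dist_triangle
        _ ≤ k + 1 := by
            have : (cycleGraph m).dist (i + (k : Fin m)) (i + ((k+1:ℕ) : Fin m)) = 1 :=
              dist_eq_one_iff_adj.mpr hadj
            omega
  have heq : i + (((j - i).val : ℕ) : Fin m) = j := by
    rw [Fin.cast_val_eq_self]; ring
  calc (cycleGraph m).dist i j
      = (cycleGraph m).dist i (i + (((j-i).val : ℕ) : Fin m)) := by rw [heq]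
    _ ≤ (j - i).val := key _

lemma dist_cycle {m : ℕ} (hm : 3 ≤ m) (i j : Fin m) :
    (cycleGraph m).dist i j = cdist m i j := by
  apply le_antisymm
  · exact le_min (dist_le_vsub hm i j) (by rw [dist_comm]; exact dist_le_vsub hm j i)
  · obtain ⟨W, hW⟩ := (cycConn hm).exists_walk_length_eq_dist i j
    have := cdist_le_walk hm i W
    rwa [cdist_self, zero_add, hW] at this

lemma cdist_triangle {m : ℕ} (hm : 3 ≤ m) (a b c : Fin m) :
    cdist m a c ≤ cdist m a b + cdist m b c := by
  rw [← dist_cycle hm, ← dist_cycle hm, ← dist_cycle hm]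
  exact (cycConn hm).dist_triangle

end CyclicDistance

section StrongProdDist

variable {α β : Type*} {G : SimpleGraph α} {H : SimpleGraph β}

lemma exists_diag_walk : ∀ {a x : α} {b y : β} (p : G.Walk a x) (q : H.Walk b y),
    ∃ W : (strongProd G H).Walk (a, b) (x, y), W.length = max p.length q.length := by
  intro a x b y p q
  induction p generalizing b y q with
  | nil =>
    induction q with
    | nil => exact ⟨.nil, by simp⟩
    | cons h' q' ih =>
      obtain ⟨W, hW⟩ := ih
      refine ⟨Walk.cons ?_ W, ?_⟩
      · exact Or.inr (Or.inl ⟨rfl, h'⟩)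
      · show W.length + 1 = _; simp [hW]
  | cons h p' ih =>
    cases q with
    | nil =>
      obtain ⟨W, hW⟩ := ih (Walk.nil : H.Walk b b)
      refine ⟨Walk.cons ?_ W, ?_⟩
      · exact Or.inl ⟨h, rfl⟩
      · show W.length + 1 = _; simp [hW]
    | cons h' q' =>
      obtain ⟨W, hW⟩ := ih q'
      refine ⟨Walk.cons ?_ W, ?_⟩
      · exact Or.inr (Or.inr ⟨h, h'⟩)
      · show W.length + 1 = _; simp [hW, Nat.succ_max_succ]

lemma strongProd_dist_le (hG : G.Connected) (hH : H.Connected) (u v : α × β) :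
    (strongProd G H).dist u v ≤ max (G.dist u.1 v.1) (H.dist u.2 v.2) := by
  obtain ⟨a, b⟩ := u; obtain ⟨x, y⟩ := v
  obtain ⟨p, hp⟩ := hG.exists_walk_length_eq_dist a x
  obtain ⟨q, hq⟩ := hH.exists_walk_length_eq_dist b y
  obtain ⟨W, hW⟩ := exists_diag_walk p q
  calc (strongProd G H).dist (a, b) (x, y) ≤ W.length := dist_le _
    _ = max p.length q.length := hW
    _ = _ := by rw [hp, hq]

lemma dist_fst_le_walk (hG : G.Connected) :
    ∀ {u v : α × β} (W : (strongProd G H).Walk u v), G.dist u.1 v.1 ≤ W.length := by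
  intro u v W
  induction W with
  | nil => simp [SimpleGraph.dist_self]
  | @cons u z v h q ih =>
    have hcase : u.1 = z.1 ∨ G.Adj u.1 z.1 := by
      rcases h with ⟨h1, _⟩ | ⟨h1, _⟩ | ⟨h1, _⟩
      · exact Or.inr h1
      · exact Or.inl h1
      · exact Or.inr h1
    rw [Walk.length_cons]
    rcases hcase with he | ha
    · rw [he]; omega
    · calc G.dist u.1 v.1 ≤ G.dist u.1 z.1 + G.dist z.1 v.1 := hG.dist_triangle
        _ ≤ 1 + q.length := by
            have : G.dist u.1 z.1 = 1 := dist_eq_one_iff_adj.mpr ha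
            omega
        _ = q.length + 1 := by omega

lemma dist_snd_le_walk (hH : H.Connected) :
    ∀ {u v : α × β} (W : (strongProd G H).Walk u v), H.dist u.2 v.2 ≤ W.length := by
  intro u v W
  induction W with
  | nil => simp [SimpleGraph.dist_self]
  | @cons u z v h q ih =>
    have hcase : u.2 = z.2 ∨ H.Adj u.2 z.2 := by
      rcases h with ⟨_, h2⟩ | ⟨_, h2⟩ | ⟨_, h2⟩
      · exact Or.inl h2
      · exact Or.inr h2
      · exact Or.inr h2
    rw [Walk.length_cons]
    rcases hcase with he | ha
    · rw [he]; omega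
    · calc H.dist u.2 v.2 ≤ H.dist u.2 z.2 + H.dist z.2 v.2 := hH.dist_triangle
        _ ≤ 1 + q.length := by
            have : H.dist u.2 z.2 = 1 := dist_eq_one_iff_adj.mpr ha
            omega
        _ = q.length + 1 := by omega

lemma strongProd_dist (hG : G.Connected) (hH : H.Connected) (u v : α × β) :
    (strongProd G H).dist u v = max (G.dist u.1 v.1) (H.dist u.2 v.2) := by
  refine le_antisymm (strongProd_dist_le hG hH u v) ?_
  have hr : (strongProd G H).Reachable u v := by
    obtain ⟨p⟩ := hG u.1 v.1
    obtain ⟨q⟩ := hH u.2 v.2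
    obtain ⟨W, -⟩ := exists_diag_walk p q
    exact ⟨(by simpa using W : (strongProd G H).Walk u v)⟩
  obtain ⟨W, hW⟩ := hr.exists_walk_length_eq_dist
  rw [← hW]
  exact max_le (dist_fst_le_walk hG W) (dist_snd_le_walk hH W)

end StrongProdDist

lemma vsub_total {m : ℕ} (a x : Fin m) :
    (x - a).val + (a - x).val = if x = a then 0 else m := by
  have h := Fin.ext_iff (a := x) (b := a)
  have hx := x.isLt; have ha := a.isLt
  rw [vsub_eq, vsub_eq]
  by_cases he : x = a
  · simp [he]
  · rw [if_neg he]
    have : ¬ x.val = a.val := fun hh => he (Fin.ext hh)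
    split_ifs <;> omega


section comb
variable {m d p : ℕ}

def ball (m d : ℕ) (a : Fin m) : Finset (Fin m) :=
  univ.filter (fun x => cdist m a x ≤ d)

lemma _root_.mem_ball {a x : Fin m} : x ∈ ball m d a ↔ cdist m a x ≤ d := by
  simp [_root_.ball]

lemma ball_card_le (a : Fin m) : (ball m d a).card ≤ 2 * d + 1 := by
  classical
  have hm : 0 < m := a.pos
  haveI : NeZero m := ⟨by omega⟩
  rcases le_or_gt m (2 * d + 1) with hsm | hsm
  · calc (ball m d a).card ≤ (univ : Finset (Fin m)).card := card_le_card (subset_univ _)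
      _ = m := by simp
      _ ≤ 2 * d + 1 := hsm
  · rw [← card_range (2 * d + 1)]
    apply Finset.card_le_card_of_injOn (f := fun x => ((x - a) + (d : Fin m)).val)
    · intro x hx
      rw [mem_coe, _root_.mem_ball, cdist] at hx
      have htot := vsub_total a x
      have hdval : ((d : ℕ) : Fin m).val = d := Fin.val_cast_of_lt (by omega)
      have hu := (x - a).isLt
      simp only [mem_coe]
      rw [mem_range, Fin.val_add, hdval]
      by_cases he : x = a
      · simp [he, Nat.mod_eq_of_lt (show d < m by omega)]
        omega
      · rw [if_neg he] at htot
        rcases le_or_gt ((x - a).val + d) (m - 1) with hc | hc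
        · rw [Nat.mod_eq_of_lt (by omega)]
          omega
        · have : (x - a).val + d - m < m := by omega
          have heq : ((x - a).val + d) % m = (x - a).val + d - m := by
            rw [Nat.mod_eq_sub_mod (by omega), Nat.mod_eq_of_lt (by omega)]
          rw [heq]
          omega
    · intro x _ y _ hxy
      simp only at hxy
      have : (x - a) + (d : Fin m) = (y - a) + (d : Fin m) := Fin.ext hxy
      have h2 : x - a = y - a := by
        exact add_right_cancel this
      have h3 := congrArg (· + a) h2
      simpa [sub_add_cancel] using h3

lemma ball_card_eq (hsm : 2 * d + 1 ≤ m) (a : Fin m) : (ball m d a).card = 2 * d + 1 := by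
  classical
  have hm : 0 < m := a.pos
  haveI : NeZero m := ⟨by omega⟩
  refine le_antisymm (ball_card_le a) ?_
  have hdval : ((d : ℕ) : Fin m).val = d := Fin.val_cast_of_lt (by omega)
  have hsub : ((range (2 * d + 1)).image (fun (k : ℕ) => a + (k : Fin m) - (d : Fin m)))
      ⊆ ball m d a := by
    intro x hx
    simp only [mem_image, mem_range] at hx
    obtain ⟨k, hk, rfl⟩ := hx
    have hkval : ((k : ℕ) : Fin m).val = k := Fin.val_cast_of_lt (by omega)
    rw [_root_.mem_ball, cdist]
    have h1 : a + (k : Fin m) - (d : Fin m) - a = (k : Fin m) - (d : Fin m) := by ring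
    have h2 : a - (a + (k : Fin m) - (d : Fin m)) = (d : Fin m) - (k : Fin m) := by ring
    rw [h1, h2, vsub_eq, vsub_eq, hdval, hkval]
    split_ifs <;> omega
  have hinj : Set.InjOn (fun (k : ℕ) => a + (k : Fin m) - (d : Fin m)) (range (2 * d + 1)) := by
    intro k hk l hl hkl
    simp only [mem_coe, mem_range] at hk hl
    simp only at hkl
    have : (k : Fin m) = (l : Fin m) := by
      have h1 := congrArg (· + (d : Fin m)) hkl
      simp only [sub_add_cancel] at h1
      exact add_left_cancel h1
    have := congrArg Fin.val this
    rwa [Fin.val_cast_of_lt (by omega), Fin.val_cast_of_lt (by omega)] at this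
  calc 2 * d + 1 = ((range (2 * d + 1)).image (fun (k : ℕ) => a + (k : Fin m) - (d : Fin m))).card := by
        rw [card_image_of_injOn hinj, card_range]
    _ ≤ (ball m d a).card := card_le_card hsub

lemma ball_eq_univ (hsm : m ≤ 2 * d + 1) (a : Fin m) : ball m d a = univ := by
  ext x
  simp only [mem_univ, iff_true, _root_.mem_ball]
  calc cdist m a x ≤ m / 2 := cdist_le_half' a x
    _ ≤ d := by omega

/-- any pairwise `p+1`-separated set has `card * (p+1) ≤ m` -/
lemma packing_bound (hpm : p + 1 ≤ m) {R : Finset (Fin m)}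
    (hR : ∀ x ∈ R, ∀ y ∈ R, x ≠ y → p + 1 ≤ cdist m x y) : R.card * (p + 1) ≤ m := by
  classical
  have hm : 0 < m := by omega
  haveI : NeZero m := ⟨by omega⟩
  have hI : ∀ x : Fin m, ((range (p+1)).image (fun (j : ℕ) => x + (j : Fin m))).card = p + 1 := by
    intro x
    rw [card_image_of_injOn, card_range]
    intro k hk l hl hkl
    simp only [mem_coe, mem_range] at hk hl
    have : (k : Fin m) = (l : Fin m) := add_left_cancel hkl
    have := congrArg Fin.val this
    rwa [Fin.val_cast_of_lt (by omega), Fin.val_cast_of_lt (by omega)] at this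
  have hdisj : (R : Set (Fin m)).PairwiseDisjoint
      (fun x => (range (p+1)).image (fun (j : ℕ) => x + (j : Fin m))) := by
    intro x hx y hy hxy
    simp only [Function.onFun, Finset.disjoint_left]
    intro z hzx hzy
    simp only [mem_image, mem_range] at hzx hzy
    obtain ⟨k, hk, rfl⟩ := hzx
    obtain ⟨l, hl, hkl⟩ := hzy
    -- x + k = y + l with k,l ≤ p ⟹ cdist x y ≤ p
    have hclose : cdist m x y ≤ p := by
      have hky : x - y = (l : Fin m) - (k : Fin m) := by
        have := hkl.symm
        calc x - y = (y + (l : Fin m)) - (k : Fin m) - y := by rw [← this]; ring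
          _ = (l : Fin m) - (k : Fin m) := by ring
      have hyx : y - x = (k : Fin m) - (l : Fin m) := by
        rw [← neg_sub, hky]; ring
      rw [cdist, hky, hyx, vsub_eq, vsub_eq,
        Fin.val_cast_of_lt (show k < m by omega), Fin.val_cast_of_lt (show l < m by omega)]
      split_ifs <;> omega
    have := hR x (mem_coe.mp hx) y (mem_coe.mp hy) hxy
    omega
  calc R.card * (p + 1) = ∑ x ∈ R, ((range (p+1)).image (fun (j : ℕ) => x + (j : Fin m))).card := by
        rw [Finset.sum_congr rfl (fun x _ => hI x), Finset.sum_const, smul_eq_mul]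
    _ = (R.biUnion (fun x => (range (p+1)).image (fun (j : ℕ) => x + (j : Fin m)))).card :=
        (Finset.card_biUnion hdisj).symm
    _ ≤ (univ : Finset (Fin m)).card := card_le_card (subset_univ _)
    _ = m := by simp

/-- any `d`-dominating set satisfies `m ≤ card * (2d+1)` -/
lemma dom_bound {A : Finset (Fin m)} (hA : ∀ v : Fin m, ∃ a ∈ A, cdist m a v ≤ d) :
    m ≤ A.card * (2 * d + 1) := by
  classical
  have hcover : (univ : Finset (Fin m)) ⊆ A.biUnion (fun a => ball m d a) := by
    intro v _
    obtain ⟨a, ha, hav⟩ := hA v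
    exact mem_biUnion.mpr ⟨a, ha, _root_.mem_ball.mpr hav⟩
  calc m = (univ : Finset (Fin m)).card := by simp
    _ ≤ (A.biUnion (fun a => ball m d a)).card := card_le_card hcover
    _ ≤ ∑ a ∈ A, (ball m d a).card := card_biUnion_le
    _ ≤ ∑ a ∈ A, (2 * d + 1) := Finset.sum_le_sum (fun a _ => ball_card_le a)
    _ = A.card * (2 * d + 1) := by rw [Finset.sum_const, smul_eq_mul]

end comb

section constr
variable {m d p : ℕ}

lemma div_add_div_le' (a b c : ℕ) (hc : 0 < c) : a / c + b / c ≤ (a + b) / c := by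
  rw [Nat.le_div_iff_mul_le hc, Nat.add_mul]
  exact Nat.add_le_add (Nat.div_mul_le_self a c) (Nat.div_mul_le_self b c)

lemma construct_single (hm : 1 ≤ m) (hmw : m ≤ 2 * d + 1) :
    ∃ A : Finset (Fin m), A.card = 1 ∧ (∀ v : Fin m, ∃ a ∈ A, cdist m a v ≤ d) ∧
      (∀ x ∈ A, ∀ y ∈ A, x ≠ y → p + 1 ≤ cdist m x y) := by
  haveI : NeZero m := ⟨by omega⟩
  refine ⟨{0}, by simp, fun v => ⟨0, by simp, ?_⟩, fun x hx y hy hxy => absurd ?_ hxy⟩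
  · calc cdist m 0 v ≤ m / 2 := cdist_le_half' 0 v
      _ ≤ d := by omega
  · simp only [mem_singleton] at hx hy
    rw [hx, hy]

lemma construct_gen (hm : 3 ≤ m) {t : ℕ} (ht : 2 ≤ t) (h1 : t * (p + 1) ≤ m)
    (h2 : m ≤ t * (2 * d + 1)) :
    ∃ A : Finset (Fin m), A.card = t ∧ (∀ v : Fin m, ∃ a ∈ A, cdist m a v ≤ d) ∧
      (∀ x ∈ A, ∀ y ∈ A, x ≠ y → p + 1 ≤ cdist m x y) := by
  classical
  haveI : NeZero m := ⟨by omega⟩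
  have ht0 : 0 < t := by omega
  set pos : ℕ → ℕ := fun i => i * m / t with hposdef
  have hpos0 : pos 0 = 0 := by simp [hposdef]
  have hposT : pos t = m := by simp only [hposdef]; exact Nat.mul_div_cancel_left m ht0
  have hmono : ∀ i j, i ≤ j → pos i ≤ pos j := fun i j h =>
    Nat.div_le_div_right (Nat.mul_le_mul_right m h)
  have hgapU : ∀ i, pos (i + 1) ≤ pos i + (2 * d + 1) := by
    intro i
    have e1 : (i + 1) * m = i * m + m := by ring
    calc pos (i + 1) = (i * m + m) / t := by rw [hposdef]; simp only []; rw [e1]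
      _ ≤ (i * m + t * (2 * d + 1)) / t := Nat.div_le_div_right (by omega)
      _ = pos i + (2 * d + 1) := by
          rw [Nat.add_mul_div_left _ _ ht0]
  have hdivtl : p + 1 ≤ m / t := by
    rw [Nat.le_div_iff_mul_le ht0]
    calc (p + 1) * t = t * (p + 1) := by ring
      _ ≤ m := h1
  have hgapL : ∀ i, pos i + (p + 1) ≤ pos (i + 1) := by
    intro i
    have e1 : (i + 1) * m = i * m + m := by ring
    calc pos i + (p + 1) ≤ pos i + m / t := by have := hdivtl; omega
      _ = i * m / t + m / t := by rw [hposdef]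
      _ ≤ (i * m + m) / t := div_add_div_le' _ _ _ ht0
      _ = pos (i + 1) := by rw [hposdef]; simp only []; rw [e1]
  have hsep : ∀ i j, i < j → pos i + (p + 1) ≤ pos j := by
    intro i j hij
    calc pos i + (p + 1) ≤ pos (i + 1) := hgapL i
      _ ≤ pos j := hmono _ _ hij
  have hlt : ∀ i, i < t → pos i < m := by
    intro i hi
    have := hsep i t hi
    omega
  set X : ℕ → Fin m := fun i => ((pos i : ℕ) : Fin m) with hXdef
  have hXval : ∀ i, i < t → (X i).val = pos i := fun i hi =>
    Fin.val_cast_of_lt (hlt i hi)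
  have hcd : ∀ i j, i < j → j < t → p + 1 ≤ cdist m (X i) (X j) := by
    intro i j hij hjt
    have hvi := hXval i (by omega)
    have hvj := hXval j hjt
    have hs1 := hsep i j hij
    have hs2 := hsep j t hjt
    rw [cdist, vsub_eq, vsub_eq, hvi, hvj]
    split_ifs <;> omega
  refine ⟨(range t).image X, ?_, ?_, ?_⟩
  · rw [card_image_of_injOn, card_range]
    intro i hi j hj hij
    simp only [mem_coe, mem_range] at hi hj
    by_contra hne
    rcases Nat.lt_or_ge i j with h | h
    · have := hcd i j h hj
      rw [hij] at this
      simp [cdist, sub_self] at this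
    · have hji : j < i := by omega
      have := hcd j i hji hi
      rw [hij] at this
      simp [cdist, sub_self] at this
  · -- domination
    intro v
    set z := v.val with hzdef
    have hz := v.isLt
    set P : ℕ → Prop := fun i => pos i ≤ z with hPdef
    have hP0 : P 0 := by simp [hPdef, hpos0]
    set i0 := Nat.findGreatest P t with hi0def
    have hspec : P i0 := Nat.findGreatest_spec (Nat.zero_le t) hP0
    have hi0le : i0 ≤ t := Nat.findGreatest_le t
    have hi0lt : i0 < t := by
      rcases Nat.lt_or_ge i0 t with h | h
      · exact h
      · exfalso
        have : i0 = t := by omega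
        rw [this] at hspec
        simp only [hPdef, hposT] at hspec
        omega
    have hnext : ¬ P (i0 + 1) ∨ i0 + 1 > t := by
      rcases Nat.lt_or_ge t (i0 + 1) with h | h
      · exact Or.inr h
      · exact Or.inl (Nat.findGreatest_is_greatest (by omega) h)
    have hzlt : z < pos (i0 + 1) := by
      rcases hnext with h | h
      · simp only [hPdef] at h; omega
      · omega
    have hzge : pos i0 ≤ z := hspec
    have hgap := hgapU i0
    rcases le_or_gt (z - pos i0) d with hcase | hcase
    · refine ⟨X i0, mem_image.mpr ⟨i0, mem_range.mpr hi0lt, rfl⟩, ?_⟩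
      have hvi := hXval i0 hi0lt
      calc cdist m (X i0) v ≤ (v - X i0).val := min_le_left _ _
        _ ≤ d := by rw [vsub_eq, hvi]; split_ifs <;> omega
    · rcases Nat.lt_or_ge (i0 + 1) t with hlt2 | hge2
      · refine ⟨X (i0 + 1), mem_image.mpr ⟨i0 + 1, mem_range.mpr hlt2, rfl⟩, ?_⟩
        have hvi := hXval (i0 + 1) hlt2
        calc cdist m (X (i0+1)) v ≤ (X (i0+1) - v).val := min_le_right _ _
          _ ≤ d := by rw [vsub_eq, hvi]; split_ifs <;> omega
      · have hi0t : i0 + 1 = t := by omega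
        refine ⟨X 0, mem_image.mpr ⟨0, mem_range.mpr (by omega), rfl⟩, ?_⟩
        have hv0 : (X 0).val = 0 := by
          rw [hXval 0 (by omega), hpos0]
        have hmz : m ≤ z + d := by
          rw [← hposT, ← hi0t]
          omega
        calc cdist m (X 0) v ≤ (X 0 - v).val := min_le_right _ _
          _ ≤ d := by rw [vsub_eq, hv0]; split_ifs <;> omega
  · -- packing
    intro x hx y hy hxy
    obtain ⟨i, hi, rfl⟩ := mem_image.mp hx
    obtain ⟨j, hj, rfl⟩ := mem_image.mp hy
    rw [mem_range] at hi hj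
    rcases lt_trichotomy i j with h | h | h
    · exact hcd i j h hj
    · exact absurd (by rw [h]) hxy
    · rw [cdist_comm']
      exact hcd j i h hi

end constr

section ProdComb
variable {m n d p q t0 : ℕ}

/-- counting lower bound for dominating sets of the torus -/
lemma prod_count (hd : 1 ≤ d) (hm1 : 1 ≤ m)
    (hn1 : n + 1 = (2*d+1)*(q+1)) (ht0w : t0 < 2*d+1)
    (hmlb : (t0-1)*(2*d+1) + 1 ≤ m)
    {S : Finset (Fin m × Fin n)}
    (hdom : ∀ v : Fin m × Fin n, ∃ s ∈ S, cdist m s.1 v.1 ≤ d ∧ cdist n s.2 v.2 ≤ d) :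
    t0 * (q+1) ≤ S.card := by
  classical
  have hcol : ∀ y : Fin n, t0 ≤ (S.filter (fun s => cdist n s.2 y ≤ d)).card := by
    intro y
    set Ay := (S.filter (fun s => cdist n s.2 y ≤ d)).image Prod.fst with hAy
    have hAdom : ∀ x : Fin m, ∃ a ∈ Ay, cdist m a x ≤ d := by
      intro x
      obtain ⟨s, hs, h1, h2⟩ := hdom (x, y)
      exact ⟨s.1, mem_image.mpr ⟨s, mem_filter.mpr ⟨hs, h2⟩, rfl⟩, h1⟩
    have hb := dom_bound hAdom
    have hcard : t0 ≤ Ay.card := by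
      by_contra hc
      push_neg at hc
      have h3 : Ay.card * (2*d+1) ≤ (t0-1)*(2*d+1) :=
        Nat.mul_le_mul_right _ (by omega)
      omega
    calc t0 ≤ Ay.card := hcard
      _ ≤ _ := card_image_le
  have hswap : ∑ y : Fin n, (S.filter (fun s => cdist n s.2 y ≤ d)).card
      = ∑ s ∈ S, (ball n d s.2).card := by
    simp_rw [Finset.card_filter]
    rw [Finset.sum_comm]
    refine Finset.sum_congr rfl (fun s _ => ?_)
    rw [_root_.ball, Finset.card_filter]
  have hub : ∑ s ∈ S, (ball n d s.2).card ≤ S.card * (2*d+1) := by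
    calc ∑ s ∈ S, (ball n d s.2).card ≤ ∑ _s ∈ S, (2*d+1) :=
        Finset.sum_le_sum (fun s _ => ball_card_le _)
      _ = S.card * (2*d+1) := by rw [Finset.sum_const, smul_eq_mul]
  have hlb : n * t0 ≤ ∑ y : Fin n, (S.filter (fun s => cdist n s.2 y ≤ d)).card := by
    calc n * t0 = ∑ _y : Fin n, t0 := by
          rw [Finset.sum_const, card_univ, Fintype.card_fin, smul_eq_mul]
      _ ≤ _ := Finset.sum_le_sum (fun y _ => hcol y)
  have h1 : n * t0 ≤ S.card * (2*d+1) := by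
    rw [hswap] at hlb
    exact le_trans hlb hub
  by_contra hc
  push_neg at hc
  have hc' : S.card + 1 ≤ t0 * (q+1) := hc
  have h2 : (S.card + 1) * (2*d+1) ≤ (t0*(q+1)) * (2*d+1) := Nat.mul_le_mul_right _ hc'
  have h3 : (t0*(q+1))*(2*d+1) = n*t0 + t0 := by
    calc (t0*(q+1))*(2*d+1) = t0*((2*d+1)*(q+1)) := by ring
      _ = t0*(n+1) := by rw [← hn1]
      _ = n*t0 + t0 := by ring
  have h4 : (S.card+1)*(2*d+1) = S.card*(2*d+1) + (2*d+1) := by ring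
  omega

/-- no admissible set in the torus when `p ≥ 2d` and `n ≡ 2d (mod 2d+1)`, `n ≥ 2d+1` -/
lemma boxes_infeasible (hd : 1 ≤ d) (hm3 : 3 ≤ m) (hn3 : 3 ≤ n)
    (hmle : m ≤ 2*d*(2*d+1)) (hnw : 2*d+1 ≤ n) (hnmod : n % (2*d+1) = 2*d) (hp : 2*d ≤ p)
    {S : Finset (Fin m × Fin n)}
    (hdom : ∀ v : Fin m × Fin n, ∃ s ∈ S, cdist m s.1 v.1 ≤ d ∧ cdist n s.2 v.2 ≤ d)
    (hpack : ∀ s ∈ S, ∀ s' ∈ S, s ≠ s' →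
      p + 1 ≤ max (cdist m s.1 s'.1) (cdist n s.2 s'.2)) : False := by
  classical
  set box : Fin m × Fin n → Finset (Fin m × Fin n) :=
    fun s => (ball m d s.1) ×ˢ (ball n d s.2) with hbox
  have hmem : ∀ s v, v ∈ box s ↔ cdist m s.1 v.1 ≤ d ∧ cdist n s.2 v.2 ≤ d := by
    intro s v
    rw [hbox]
    simp [Finset.mem_product, _root_.mem_ball]
  have hdisj : (S : Set (Fin m × Fin n)).PairwiseDisjoint box := by
    intro s hs s' hs' hne
    simp only [Function.onFun, Finset.disjoint_left]
    intro v hv hv'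
    rw [hmem] at hv hv'
    have htm : cdist m s.1 s'.1 ≤ 2*d := by
      calc cdist m s.1 s'.1 ≤ cdist m s.1 v.1 + cdist m v.1 s'.1 := cdist_triangle hm3 _ _ _
        _ ≤ d + d := by
            have := hv'.1
            rw [cdist_comm' v.1 s'.1]
            exact Nat.add_le_add hv.1 this
        _ = 2*d := by ring
    have htn : cdist n s.2 s'.2 ≤ 2*d := by
      calc cdist n s.2 s'.2 ≤ cdist n s.2 v.2 + cdist n v.2 s'.2 := cdist_triangle hn3 _ _ _
        _ ≤ d + d := by
            have := hv'.2
            rw [cdist_comm' v.2 s'.2]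
            exact Nat.add_le_add hv.2 this
        _ = 2*d := by ring
    have hP := hpack s (mem_coe.mp hs) s' (mem_coe.mp hs') hne
    have : p + 1 ≤ 2*d := le_trans hP (max_le htm htn)
    omega
  have hcover : (univ : Finset (Fin m × Fin n)) = S.biUnion box := by
    apply Finset.Subset.antisymm
    · intro v _
      obtain ⟨s, hs, h1, h2⟩ := hdom v
      exact mem_biUnion.mpr ⟨s, hs, (hmem s v).mpr ⟨h1, h2⟩⟩
    · exact subset_univ _
  have hcards : m * n = ∑ s ∈ S, (box s).card := by
    calc m*n = (univ : Finset (Fin m × Fin n)).card := by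
          rw [card_univ, Fintype.card_prod, Fintype.card_fin, Fintype.card_fin]
      _ = (S.biUnion box).card := by rw [hcover]
      _ = ∑ s ∈ S, (box s).card := card_biUnion hdisj
  have hballn : ∀ b : Fin n, (ball n d b).card = 2*d+1 := fun b => ball_card_eq hnw b
  rcases le_or_gt (2*d+1) m with hmw | hmw
  · have hboxcard : ∀ s : Fin m × Fin n, (box s).card = (2*d+1)*(2*d+1) := by
      intro s
      rw [hbox]
      simp only []
      rw [Finset.card_product, ball_card_eq hmw, hballn]
    have heq : m*n = S.card * ((2*d+1)*(2*d+1)) := by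
      rw [hcards, Finset.sum_congr rfl (fun s _ => hboxcard s), Finset.sum_const, smul_eq_mul]
    have hcop : Nat.Coprime (2*d+1) n := by
      have h1 : Nat.gcd (2*d+1) n = Nat.gcd (n % (2*d+1)) (2*d+1) := Nat.gcd_rec _ n
      rw [hnmod] at h1
      have h2 : Nat.gcd (2*d) (2*d+1) = Nat.gcd ((2*d+1) % (2*d)) (2*d) := Nat.gcd_rec _ _
      have h3 : (2*d+1) % (2*d) = 1 := by
        rw [Nat.add_mod_left]
        exact Nat.mod_eq_of_lt (by omega)
      rw [h3] at h2
      unfold Nat.Coprime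
      rw [h1, h2]
      exact Nat.gcd_one_left _
    have hdvd1 : (2*d+1) ∣ m * n := ⟨S.card * (2*d+1), by rw [heq]; ring⟩
    have hdvd2 : (2*d+1) ∣ m := hcop.dvd_of_dvd_mul_right hdvd1
    obtain ⟨c, hc⟩ := hdvd2
    have hc1 : 1 ≤ c := by
      rcases Nat.eq_zero_or_pos c with h | h
      · rw [h, mul_zero] at hc; omega
      · exact h
    have hcle : c ≤ 2*d := by
      by_contra hcc
      push_neg at hcc
      have h5 : (2*d+1)*(2*d+1) ≤ (2*d+1)*c := Nat.mul_le_mul_left _ hcc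
      have e1 : (2*d+1)*(2*d+1) = 2*d*(2*d+1) + (2*d+1) := by ring
      omega
    have hcancel : c * n = S.card * (2*d+1) := by
      have h7 : (2*d+1)*(c*n) = (2*d+1)*(S.card*(2*d+1)) := by
        calc (2*d+1)*(c*n) = ((2*d+1)*c)*n := by ring
          _ = m*n := by rw [← hc]
          _ = S.card*((2*d+1)*(2*d+1)) := heq
          _ = (2*d+1)*(S.card*(2*d+1)) := by ring
      exact Nat.eq_of_mul_eq_mul_left (by omega) h7
    have hdvd3 : (2*d+1) ∣ c * n := ⟨S.card, by rw [hcancel]; ring⟩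
    have hdvd4 : (2*d+1) ∣ c := hcop.dvd_of_dvd_mul_right hdvd3
    have := Nat.le_of_dvd (by omega) hdvd4
    omega
  · have hboxcard : ∀ s : Fin m × Fin n, (box s).card = m*(2*d+1) := by
      intro s
      rw [hbox]
      simp only []
      rw [Finset.card_product, ball_eq_univ (by omega), hballn, card_univ, Fintype.card_fin]
    have heq : m*n = S.card * (m*(2*d+1)) := by
      rw [hcards, Finset.sum_congr rfl (fun s _ => hboxcard s), Finset.sum_const, smul_eq_mul]
    have hcancel : n = S.card*(2*d+1) := by
      have h7 : m*n = m*(S.card*(2*d+1)) := by rw [heq]; ring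
      exact Nat.eq_of_mul_eq_mul_left (by omega) h7
    have hmod0 : n % (2*d+1) = 0 := by
      rw [hcancel]
      exact Nat.mul_mod_left _ _
    omega

end ProdComb

section Infeas
variable {m n d p q t0 : ℕ}

/-- no admissible set in the torus when `γ(C_m) = ∞`, `q ≥ 1`, `p + 1 ≤ 2d` -/
lemma windows_infeasible (hd : 1 ≤ d) (hm3 : 3 ≤ m)
    (hn1 : n + 1 = (2*d+1)*(q+1)) (hq1 : 1 ≤ q) (ht0w : t0 < 2*d+1)
    (hmlb : (t0-1)*(2*d+1) + 1 ≤ m) (hwm : 2*d+1 < m) (hmub2 : m + 1 ≤ t0*(p+1))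
    (hp2d : p + 1 ≤ 2*d)
    {S : Finset (Fin m × Fin n)}
    (hdom : ∀ v : Fin m × Fin n, ∃ s ∈ S, cdist m s.1 v.1 ≤ d ∧ cdist n s.2 v.2 ≤ d)
    (hpack : ∀ s ∈ S, ∀ s' ∈ S, s ≠ s' →
      p + 1 ≤ max (cdist m s.1 s'.1) (cdist n s.2 s'.2)) : False := by
  have hnbig : 4*d+1 ≤ n := by
    have h0 : (2*d+1)*2 ≤ (2*d+1)*(q+1) := Nat.mul_le_mul_left _ (by omega)
    have h1 : (2*d+1)*2 = 4*d+2 := by ring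
    omega
  haveI : NeZero n := ⟨by omega⟩
  have hpm : p + 1 ≤ m := by omega
  have hS := prod_count hd (by omega) hn1 ht0w hmlb hdom
  set win : Fin n → Finset (Fin n) :=
    fun y => (range (p+1)).image (fun (j : ℕ) => y + (j : Fin n)) with hwindef
  have hwinmem : ∀ y z : Fin n, z ∈ win y ↔ ∃ j, j ≤ p ∧ z = y + (j : Fin n) := by
    intro y z
    rw [hwindef]
    simp only [mem_image, mem_range]
    constructor
    · rintro ⟨j, hj, rfl⟩
      exact ⟨j, by omega, rfl⟩
    · rintro ⟨j, hj, rfl⟩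
      exact ⟨j, by omega, rfl⟩
  have hwin : ∀ y : Fin n, (S.filter (fun s => s.2 ∈ win y)).card ≤ t0 - 1 := by
    intro y
    set Wy := S.filter (fun s => s.2 ∈ win y) with hWy
    have hclose : ∀ s ∈ Wy, ∀ s' ∈ Wy, cdist n s.2 s'.2 ≤ p := by
      intro s hs s' hs'
      rw [hWy, mem_filter] at hs hs'
      obtain ⟨j, hj, hjs⟩ := (hwinmem y s.2).mp hs.2
      obtain ⟨j', hj', hjs'⟩ := (hwinmem y s'.2).mp hs'.2
      rw [hjs, hjs']
      have h1 : (y + (j':Fin n)) - (y + (j:Fin n)) = (j' : Fin n) - (j : Fin n) := by ring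
      have h2 : (y + (j:Fin n)) - (y + (j':Fin n)) = (j : Fin n) - (j' : Fin n) := by ring
      rw [cdist, h1, h2, vsub_eq, vsub_eq,
        Fin.val_cast_of_lt (show j < n by omega), Fin.val_cast_of_lt (show j' < n by omega)]
      split_ifs <;> omega
    have hinj : Set.InjOn Prod.fst (Wy : Set (Fin m × Fin n)) := by
      intro s hs s' hs' heq
      by_contra hne
      have hp1 := hpack s (mem_filter.mp (mem_coe.mp hs)).1 s'
        (mem_filter.mp (mem_coe.mp hs')).1 hne
      have hcd1 : cdist m s.1 s'.1 = 0 := by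
        rw [heq]
        exact cdist_self _
      have hcd2 := hclose s (mem_coe.mp hs) s' (mem_coe.mp hs')
      have : max (cdist m s.1 s'.1) (cdist n s.2 s'.2) ≤ p := max_le (by omega) hcd2
      omega
    have hfar : ∀ x ∈ Wy.image Prod.fst, ∀ x' ∈ Wy.image Prod.fst,
        x ≠ x' → p + 1 ≤ cdist m x x' := by
      intro x hx x' hx' hne
      obtain ⟨s, hs, rfl⟩ := mem_image.mp hx
      obtain ⟨s', hs', rfl⟩ := mem_image.mp hx'
      have hnes : s ≠ s' := fun h => hne (by rw [h])
      have hp1 := hpack s (mem_filter.mp hs).1 s' (mem_filter.mp hs').1 hnes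
      have hcd2 := hclose s hs s' hs'
      rcases le_or_gt (p+1) (cdist m s.1 s'.1) with h | h
      · exact h
      · exfalso
        have : max (cdist m s.1 s'.1) (cdist n s.2 s'.2) ≤ p := max_le (by omega) hcd2
        omega
    have hpb := packing_bound hpm hfar
    have hcardIm : (Wy.image Prod.fst).card = Wy.card := card_image_of_injOn hinj
    rw [hcardIm] at hpb
    by_contra hcc
    push_neg at hcc
    have h8 : t0*(p+1) ≤ Wy.card*(p+1) := Nat.mul_le_mul_right _ (by omega)
    omega
  have hswap : ∑ y : Fin n, (S.filter (fun s => s.2 ∈ win y)).card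
      = ∑ s ∈ S, ((univ : Finset (Fin n)).filter (fun y => s.2 ∈ win y)).card := by
    simp_rw [Finset.card_filter]
    rw [Finset.sum_comm]
  have hper : ∀ s : Fin m × Fin n,
      ((univ : Finset (Fin n)).filter (fun y => s.2 ∈ win y)).card = p + 1 := by
    intro s
    have himg : ((univ : Finset (Fin n)).filter (fun y => s.2 ∈ win y))
        = (range (p+1)).image (fun (j : ℕ) => s.2 - (j : Fin n)) := by
      ext y
      simp only [mem_filter, mem_univ, true_and, mem_image, mem_range]
      rw [hwinmem]
      constructor
      · rintro ⟨j, hj, hy⟩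
        exact ⟨j, by omega, by rw [hy]; ring⟩
      · rintro ⟨j, hj, rfl⟩
        exact ⟨j, by omega, by ring⟩
    rw [himg, card_image_of_injOn, card_range]
    intro j hj j' hj' hjj
    simp only [mem_coe, mem_range] at hj hj'
    simp only at hjj
    have hfin : (j : Fin n) = (j' : Fin n) := sub_right_inj.mp hjj
    have := congrArg Fin.val hfin
    rwa [Fin.val_cast_of_lt (by omega), Fin.val_cast_of_lt (by omega)] at this
  have htot : S.card * (p+1) ≤ n * (t0 - 1) := by
    calc S.card * (p+1) = ∑ _s ∈ S, (p+1) := by rw [Finset.sum_const, smul_eq_mul]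
      _ = ∑ s ∈ S, ((univ : Finset (Fin n)).filter (fun y => s.2 ∈ win y)).card :=
          Finset.sum_congr rfl (fun s _ => (hper s).symm)
      _ = ∑ y : Fin n, (S.filter (fun s => s.2 ∈ win y)).card := hswap.symm
      _ ≤ ∑ _y : Fin n, (t0 - 1) := Finset.sum_le_sum (fun y _ => hwin y)
      _ = n * (t0-1) := by rw [Finset.sum_const, card_univ, Fintype.card_fin, smul_eq_mul]
  have k1 : (t0*(q+1))*(p+1) ≤ S.card*(p+1) := Nat.mul_le_mul_right _ hS
  have k4 : (q+1)*(m+1) ≤ (q+1)*(t0*(p+1)) := Nat.mul_le_mul_left _ hmub2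
  have k5 : (q+1)*(t0*(p+1)) = (t0*(q+1))*(p+1) := by ring
  have k7 : (q+1)*((t0-1)*(2*d+1) + 2) ≤ (q+1)*(m+1) := Nat.mul_le_mul_left _ (by omega)
  have k8 : (q+1)*((t0-1)*(2*d+1) + 2) = (t0-1)*((2*d+1)*(q+1)) + 2*(q+1) := by ring
  have k9 : (t0-1)*((2*d+1)*(q+1)) = (t0-1)*(n+1) := by rw [← hn1]
  have k10 : (t0-1)*(n+1) = n*(t0-1) + (t0-1) := by ring
  omega

/-- no admissible set in the torus when `γ(C_m) = ∞` and `n = 2d` -/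
lemma smalln_infeasible (hd : 1 ≤ d) (hm3 : 3 ≤ m) (hn2d : n = 2*d)
    (ht02 : 2 ≤ t0) (hmlb : (t0-1)*(2*d+1)+1 ≤ m) (hmub2 : m+1 ≤ t0*(p+1))
    {S : Finset (Fin m × Fin n)}
    (hdom : ∀ v : Fin m × Fin n, ∃ s ∈ S, cdist m s.1 v.1 ≤ d ∧ cdist n s.2 v.2 ≤ d)
    (hpack : ∀ s ∈ S, ∀ s' ∈ S, s ≠ s' →
      p + 1 ≤ max (cdist m s.1 s'.1) (cdist n s.2 s'.2)) : False := by
  classical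
  haveI : NeZero n := ⟨by omega⟩
  have hpd : d ≤ p := by
    by_contra hcp
    push_neg at hcp
    have c1 : t0*(p+1) ≤ t0*d := Nat.mul_le_mul_left _ (by omega)
    have c2 : (t0-1)*(2*d+1) = t0*(2*d+1) - 1*(2*d+1) := by rw [Nat.sub_mul]
    have c3 : t0*(2*d+1) = 2*(t0*d) + t0 := by ring
    have c4 : 2*d ≤ t0*d := Nat.mul_le_mul_right _ ht02
    omega
  have hA : ∀ x : Fin m, ∃ a ∈ S.image Prod.fst, cdist m a x ≤ d := by
    intro x
    obtain ⟨s, hs, h1, _⟩ := hdom (x, (0 : Fin n))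
    exact ⟨s.1, mem_image_of_mem _ hs, h1⟩
  have hb := dom_bound hA
  have hcard : t0 ≤ (S.image Prod.fst).card := by
    by_contra hc
    push_neg at hc
    have h3 : (S.image Prod.fst).card*(2*d+1) ≤ (t0-1)*(2*d+1) :=
      Nat.mul_le_mul_right _ (by omega)
    omega
  have hpair : ∃ x ∈ S.image Prod.fst, ∃ x' ∈ S.image Prod.fst,
      x ≠ x' ∧ cdist m x x' ≤ p := by
    by_contra hcc
    push_neg at hcc
    have hfar : ∀ x ∈ S.image Prod.fst, ∀ x' ∈ S.image Prod.fst,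
        x ≠ x' → p + 1 ≤ cdist m x x' := by
      intro x hx x' hx' hne
      have := hcc x hx x' hx' hne
      omega
    obtain ⟨x, hx, x', hx', hne⟩ := Finset.one_lt_card.mp
      (lt_of_lt_of_le (by omega : 1 < t0) hcard)
    have h1 := hfar x hx x' hx' hne
    have h2 := cdist_le_half' x x'
    have hpm : p + 1 ≤ m := by omega
    have hpb := packing_bound hpm hfar
    have h8 : t0*(p+1) ≤ (S.image Prod.fst).card*(p+1) := Nat.mul_le_mul_right _ hcard
    omega
  obtain ⟨x, hx, x', hx', hne, hclose⟩ := hpair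
  obtain ⟨s, hs, rfl⟩ := mem_image.mp hx
  obtain ⟨s', hs', rfl⟩ := mem_image.mp hx'
  have hnes : s ≠ s' := fun h => hne (by rw [h])
  have hp1 := hpack s hs s' hs' hnes
  have hcd2 : cdist n s.2 s'.2 ≤ d := by
    have := cdist_le_half' s.2 s'.2
    omega
  have : max (cdist m s.1 s'.1) (cdist n s.2 s'.2) ≤ p := max_le hclose (by omega)
  omega

end Infeas

section Plumbing
variable {V : Type*} {G : SimpleGraph V} {d p : ℕ}

lemma dpdn_le {S : Finset V} (h1 : IsDistDomSet G d S) (h2 : IsPacking G p S) :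
    distPackDomNum G d p ≤ (S.card : ℕ∞) :=
  sInf_le ⟨S, rfl, h1, h2⟩

lemma le_dpdn (k : ℕ)
    (h : ∀ S : Finset V, IsDistDomSet G d S → IsPacking G p S → k ≤ S.card) :
    (k : ℕ∞) ≤ distPackDomNum G d p := by
  apply le_sInf
  rintro x ⟨S, rfl, h1, h2⟩
  exact_mod_cast h S h1 h2

lemma dpdn_top (h : ∀ S : Finset V, IsDistDomSet G d S → IsPacking G p S → False) :
    distPackDomNum G d p = ⊤ := by
  rw [distPackDomNum, sInf_eq_top]
  rintro x ⟨S, rfl, h1, h2⟩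
  exact (h S h1 h2).elim

lemma dpdn_ne_zero (v : V) : distPackDomNum G d p ≠ 0 := by
  intro h0
  have h1 : (1 : ℕ∞) ≤ distPackDomNum G d p := by
    have := le_dpdn (G := G) (d := d) (p := p) 1 ?_
    · exact_mod_cast this
    · intro S hS _
      obtain ⟨u, hu, -⟩ := hS v
      exact Nat.one_le_iff_ne_zero.mpr (fun hc => by simp [Finset.card_eq_zero.mp hc] at hu)
  rw [h0] at h1
  simp at h1

end Plumbing

section Transfer
variable {m n d p : ℕ}

lemma cycle_dom_iff (hm : 3 ≤ m) {S : Finset (Fin m)} :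
    IsDistDomSet (cycleGraph m) d S ↔ ∀ v : Fin m, ∃ a ∈ S, cdist m a v ≤ d := by
  unfold IsDistDomSet
  constructor <;> intro h v <;> obtain ⟨u, hu, hud⟩ := h v <;> refine ⟨u, hu, ?_⟩
  · rwa [dist_cycle hm] at hud
  · rwa [dist_cycle hm]

lemma cycle_pack_iff (hm : 3 ≤ m) {S : Finset (Fin m)} :
    IsPacking (cycleGraph m) p S ↔ ∀ x ∈ S, ∀ y ∈ S, x ≠ y → p + 1 ≤ cdist m x y := by
  unfold IsPacking
  constructor <;> intro h x hx y hy hxy <;> have h2 := h x hx y hy hxy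
  · rwa [dist_cycle hm] at h2
  · rwa [dist_cycle hm]

lemma torus_dom_iff (hm : 3 ≤ m) (hn : 3 ≤ n) {S : Finset (Fin m × Fin n)} :
    IsDistDomSet (strongProd (cycleGraph m) (cycleGraph n)) d S ↔
      ∀ v : Fin m × Fin n, ∃ s ∈ S, cdist m s.1 v.1 ≤ d ∧ cdist n s.2 v.2 ≤ d := by
  unfold IsDistDomSet
  constructor <;> intro h v <;> obtain ⟨u, hu, hud⟩ := h v <;> refine ⟨u, hu, ?_⟩
  · rwa [strongProd_dist (cycConn hm) (cycConn hn), dist_cycle hm, dist_cycle hn,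
      max_le_iff] at hud
  · rwa [strongProd_dist (cycConn hm) (cycConn hn), dist_cycle hm, dist_cycle hn, max_le_iff]

lemma torus_pack_iff (hm : 3 ≤ m) (hn : 3 ≤ n) {S : Finset (Fin m × Fin n)} :
    IsPacking (strongProd (cycleGraph m) (cycleGraph n)) p S ↔
      ∀ s ∈ S, ∀ s' ∈ S, s ≠ s' → p + 1 ≤ max (cdist m s.1 s'.1) (cdist n s.2 s'.2) := by
  unfold IsPacking
  constructor <;> intro h x hx y hy hxy <;> have h2 := h x hx y hy hxy
  · rwa [strongProd_dist (cycConn hm) (cycConn hn), dist_cycle hm, dist_cycle hn] at h2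
  · rwa [strongProd_dist (cycConn hm) (cycConn hn), dist_cycle hm, dist_cycle hn]

lemma prod_set_adm {A : Finset (Fin m)} {B : Finset (Fin n)}
    (hAdom : ∀ v : Fin m, ∃ a ∈ A, cdist m a v ≤ d)
    (hApack : ∀ x ∈ A, ∀ y ∈ A, x ≠ y → p + 1 ≤ cdist m x y)
    (hBdom : ∀ v : Fin n, ∃ b ∈ B, cdist n b v ≤ d)
    (hBpack : ∀ x ∈ B, ∀ y ∈ B, x ≠ y → p + 1 ≤ cdist n x y) :
    (∀ v : Fin m × Fin n, ∃ s ∈ A ×ˢ B, cdist m s.1 v.1 ≤ d ∧ cdist n s.2 v.2 ≤ d) ∧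
    (∀ s ∈ A ×ˢ B, ∀ s' ∈ A ×ˢ B, s ≠ s' →
      p + 1 ≤ max (cdist m s.1 s'.1) (cdist n s.2 s'.2)) := by
  constructor
  · intro v
    obtain ⟨a, ha, h1⟩ := hAdom v.1
    obtain ⟨b, hb, h2⟩ := hBdom v.2
    exact ⟨(a, b), Finset.mem_product.mpr ⟨ha, hb⟩, h1, h2⟩
  · intro s hs s' hs' hne
    rw [Finset.mem_product] at hs hs'
    rcases eq_or_ne s.1 s'.1 with he | hne1
    · have hne2 : s.2 ≠ s'.2 := fun h2 => hne (Prod.ext he h2)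
      exact le_max_of_le_right (hBpack s.2 hs.2 s'.2 hs'.2 hne2)
    · exact le_max_of_le_left (hApack s.1 hs.1 s'.1 hs'.1 hne1)

end Transfer

theorem gamma_torus_eq_of_residue_2d (d p : ℕ) (hd : 1 ≤ d) (m n : ℕ) (hm : 3 ≤ m)
    (hn : 3 ≤ n) (hmod : n % (2 * d + 1) = 2 * d) (hmle : m ≤ 4 * d ^ 2 + 2 * d) :
    distPackDomNum (strongProd (cycleGraph m) (cycleGraph n)) d p =
      distPackDomNum (cycleGraph m) d p * distPackDomNum (cycleGraph n) d p := by
  classical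
  haveI : NeZero m := ⟨by omega⟩
  haveI : NeZero n := ⟨by omega⟩
  obtain ⟨t0, r, hdm, hrlt⟩ : ∃ t r, (2*d+1)*t + r = m + 2*d ∧ r < 2*d+1 :=
    ⟨(m+2*d)/(2*d+1), (m+2*d)%(2*d+1), Nat.div_add_mod _ _, Nat.mod_lt _ (by omega)⟩
  obtain ⟨q, hdq⟩ : ∃ t, (2*d+1)*t + 2*d = n :=
    ⟨n/(2*d+1), by conv_rhs => rw [← Nat.div_add_mod n (2*d+1), hmod]⟩
  have hcm : (2*d+1)*t0 = t0*(2*d+1) := by ring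
  have hmub : m ≤ t0*(2*d+1) := by omega
  have ht01 : 1 ≤ t0 := by
    by_contra hc
    push_neg at hc
    have h0 : t0 = 0 := by omega
    rw [h0, mul_zero] at hdm
    omega
  have hsubmul : (t0-1)*(2*d+1) + (2*d+1) = t0*(2*d+1) := by
    have e : t0 - 1 + 1 = t0 := by omega
    calc (t0-1)*(2*d+1) + (2*d+1) = ((t0-1)+1)*(2*d+1) := by ring
      _ = t0*(2*d+1) := by rw [e]
  have hmlb : (t0-1)*(2*d+1) + 1 ≤ m := by omega
  have ht0w : t0 < 2*d+1 := by
    by_contra hc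
    push_neg at hc
    have h5 : (2*d+1)*(2*d+1) ≤ (2*d+1)*t0 := Nat.mul_le_mul_left _ hc
    have e1 : (2*d+1)*(2*d+1) = 4*(d*d) + 4*d + 1 := by ring
    have e2 : 4*d^2 + 2*d = 4*(d*d) + 2*d := by ring
    omega
  have hqc : (2*d+1)*q = q*(2*d+1) := by ring
  have hn1 : n + 1 = (2*d+1)*(q+1) := by
    have e : (2*d+1)*(q+1) = (2*d+1)*q + (2*d+1) := by ring
    omega
  have hq1mul : q*(2*d+1) + 1 ≤ n := by omega
  have hmle' : m ≤ 2*d*(2*d+1) := by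
    have e : 2*d*(2*d+1) = 4*(d*d)+2*d := by ring
    have e2 : 4*d^2+2*d = 4*(d*d)+2*d := by ring
    omega
  have hγm_lb : ∀ S : Finset (Fin m), (∀ v : Fin m, ∃ a ∈ S, cdist m a v ≤ d) →
      t0 ≤ S.card := by
    intro S hS
    have hb := dom_bound hS
    by_contra hc
    push_neg at hc
    have h3 : S.card*(2*d+1) ≤ (t0-1)*(2*d+1) := Nat.mul_le_mul_right _ (by omega)
    omega
  have hγn_lb : ∀ S : Finset (Fin n), (∀ v : Fin n, ∃ a ∈ S, cdist n a v ≤ d) →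
      q+1 ≤ S.card := by
    intro S hS
    have hb := dom_bound hS
    by_contra hc
    push_neg at hc
    have h3 : S.card*(2*d+1) ≤ q*(2*d+1) := Nat.mul_le_mul_right _ (by omega)
    omega
  have ht02' : 2*d+1 < m → 2 ≤ t0 := by
    intro hc1
    by_contra hh
    push_neg at hh
    have h0 : t0 = 1 := by omega
    rw [h0, one_mul] at hmub
    omega
  -- constructions, conditionally
  have hconA : (m ≤ 2*d+1 ∨ t0*(p+1) ≤ m) →
      ∃ A : Finset (Fin m), A.card = t0 ∧ (∀ v : Fin m, ∃ a ∈ A, cdist m a v ≤ d) ∧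
        (∀ x ∈ A, ∀ y ∈ A, x ≠ y → p+1 ≤ cdist m x y) := by
    intro hFM
    rcases le_or_gt m (2*d+1) with hsm | hsm
    · have ht0eq : t0 = 1 := by
        by_contra hh
        have h2 : 2 ≤ t0 := by omega
        have h3 : 2*(2*d+1) ≤ t0*(2*d+1) := Nat.mul_le_mul_right _ h2
        omega
      rw [ht0eq]
      exact construct_single (by omega) hsm
    · have ht02 : 2 ≤ t0 := ht02' hsm
      have hFM' : t0*(p+1) ≤ m := by
        rcases hFM with h | h
        · omega
        · exact h
      exact construct_gen hm ht02 hFM' hmub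
  have hconB : (q = 0 ∨ (q+1)*(p+1) ≤ n) →
      ∃ B : Finset (Fin n), B.card = q+1 ∧ (∀ v : Fin n, ∃ b ∈ B, cdist n b v ≤ d) ∧
        (∀ x ∈ B, ∀ y ∈ B, x ≠ y → p+1 ≤ cdist n x y) := by
    intro hFN
    rcases Nat.eq_zero_or_pos q with hq0 | hq1'
    · have hq0mul : (2*d+1)*q = 0 := by rw [hq0, mul_zero]
      obtain ⟨B, h1, h2, h3⟩ := construct_single (m := n) (d := d) (p := p)
        (by omega) (by omega)
      exact ⟨B, by omega, h2, h3⟩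
    · have hfn : (q+1)*(p+1) ≤ n := by
        rcases hFN with h | h
        · omega
        · exact h
      have hnub : n ≤ (q+1)*(2*d+1) := by
        have e : (q+1)*(2*d+1) = (2*d+1)*(q+1) := by ring
        omega
      exact construct_gen hn (by omega) hfn hnub
  by_cases hex : ∃ S : Finset (Fin m × Fin n),
      (∀ v : Fin m × Fin n, ∃ s ∈ S, cdist m s.1 v.1 ≤ d ∧ cdist n s.2 v.2 ≤ d) ∧
      (∀ s ∈ S, ∀ s' ∈ S, s ≠ s' → p + 1 ≤ max (cdist m s.1 s'.1) (cdist n s.2 s'.2))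
  · obtain ⟨S0, hS0dom, hS0pack⟩ := hex
    have hFM : m ≤ 2*d+1 ∨ t0*(p+1) ≤ m := by
      by_contra hc
      push_neg at hc
      obtain ⟨hc1, hc2⟩ := hc
      rcases Nat.eq_zero_or_pos q with hq0 | hq1'
      · have hq0mul : (2*d+1)*q = 0 := by rw [hq0, mul_zero]
        have hn2d : n = 2*d := by omega
        exact smalln_infeasible hd hm hn2d (ht02' hc1) hmlb (by omega) hS0dom hS0pack
      · rcases le_or_gt (p+1) (2*d) with hp2 | hp2
        · exact windows_infeasible hd hm hn1 hq1' ht0w hmlb hc1 (by omega) hp2 hS0dom hS0pack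
        · have hnw : 2*d+1 ≤ n := by
            have h5 : 2*d+1 ≤ (2*d+1)*q := Nat.le_mul_of_pos_right _ hq1'
            omega
          exact boxes_infeasible hd hm hn hmle' hnw hmod (by omega) hS0dom hS0pack
    have hFN : q = 0 ∨ (q+1)*(p+1) ≤ n := by
      by_contra hc
      push_neg at hc
      obtain ⟨hc1, hc2⟩ := hc
      have hq1' : 1 ≤ q := Nat.pos_of_ne_zero hc1
      have hp2 : 2*d ≤ p := by
        by_contra hh
        push_neg at hh
        have h5 : (q+1)*(p+1) ≤ (q+1)*(2*d) := Nat.mul_le_mul_left _ (by omega)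
        have h6 : (q+1)*(2*d) + (q+1) = (q+1)*(2*d+1) := by ring
        have h7 : (q+1)*(2*d+1) = (2*d+1)*(q+1) := by ring
        omega
      have hnw : 2*d+1 ≤ n := by
        have h5 : 2*d+1 ≤ (2*d+1)*q := Nat.le_mul_of_pos_right _ hq1'
        omega
      exact boxes_infeasible hd hm hn hmle' hnw hmod hp2 hS0dom hS0pack
    obtain ⟨A, hAcard, hAdom, hApack⟩ := hconA hFM
    obtain ⟨B, hBcard, hBdom, hBpack⟩ := hconB hFN
    have hγm : distPackDomNum (cycleGraph m) d p = (t0 : ℕ∞) := by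
      apply le_antisymm
      · have h9 := dpdn_le ((cycle_dom_iff hm).mpr hAdom) ((cycle_pack_iff hm).mpr hApack)
        rwa [hAcard] at h9
      · exact le_dpdn t0 (fun S h1 _ => hγm_lb S ((cycle_dom_iff hm).mp h1))
    have hγn : distPackDomNum (cycleGraph n) d p = ((q+1 : ℕ) : ℕ∞) := by
      apply le_antisymm
      · have h9 := dpdn_le ((cycle_dom_iff hn).mpr hBdom) ((cycle_pack_iff hn).mpr hBpack)
        rwa [hBcard] at h9
      · exact le_dpdn (q+1) (fun S h1 _ => hγn_lb S ((cycle_dom_iff hn).mp h1))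
    have hprod := prod_set_adm hAdom hApack hBdom hBpack
    have hL : distPackDomNum (strongProd (cycleGraph m) (cycleGraph n)) d p
        = ((t0*(q+1) : ℕ) : ℕ∞) := by
      apply le_antisymm
      · have h9 := dpdn_le ((torus_dom_iff hm hn).mpr hprod.1)
          ((torus_pack_iff hm hn).mpr hprod.2)
        rwa [Finset.card_product, hAcard, hBcard] at h9
      · exact le_dpdn (t0*(q+1)) (fun S h1 _ =>
          prod_count hd (by omega) hn1 ht0w hmlb ((torus_dom_iff hm hn).mp h1))
    rw [hL, hγm, hγn]
    push_cast
    ring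
  · have hLtop : distPackDomNum (strongProd (cycleGraph m) (cycleGraph n)) d p = ⊤ := by
      apply dpdn_top
      intro S h1 h2
      exact hex ⟨S, (torus_dom_iff hm hn).mp h1, (torus_pack_iff hm hn).mp h2⟩
    rw [hLtop]
    by_cases hFM : (m ≤ 2*d+1 ∨ t0*(p+1) ≤ m)
    · by_cases hFN : (q = 0 ∨ (q+1)*(p+1) ≤ n)
      · exfalso
        obtain ⟨A, hAcard, hAdom, hApack⟩ := hconA hFM
        obtain ⟨B, hBcard, hBdom, hBpack⟩ := hconB hFN
        have hprod := prod_set_adm hAdom hApack hBdom hBpack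
        exact hex ⟨A ×ˢ B, hprod.1, hprod.2⟩
      · have hγn : distPackDomNum (cycleGraph n) d p = ⊤ := by
          apply dpdn_top
          intro S h1 h2
          push_neg at hFN
          obtain ⟨hq1', hfn⟩ := hFN
          have hcard := hγn_lb S ((cycle_dom_iff hn).mp h1)
          have hpackS := (cycle_pack_iff hn).mp h2
          have hpm : p+1 ≤ n := by
            obtain ⟨x, hx, x', hx', hne⟩ := Finset.one_lt_card.mp
              (lt_of_lt_of_le (by omega : 1 < q+1) hcard)
            have hf := hpackS x hx x' hx' hne
            have hh := cdist_le_half' x x'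
            omega
          have hpb := packing_bound hpm hpackS
          have h8 : (q+1)*(p+1) ≤ S.card*(p+1) := Nat.mul_le_mul_right _ hcard
          omega
        rw [hγn]
        exact (ENat.mul_top (dpdn_ne_zero (0 : Fin m))).symm
    · have hγm : distPackDomNum (cycleGraph m) d p = ⊤ := by
        apply dpdn_top
        intro S h1 h2
        push_neg at hFM
        obtain ⟨hc1, hc2⟩ := hFM
        have hcard := hγm_lb S ((cycle_dom_iff hm).mp h1)
        have ht02 : 2 ≤ t0 := ht02' hc1
        have hpackS := (cycle_pack_iff hm).mp h2
        have hpm : p+1 ≤ m := by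
          obtain ⟨x, hx, x', hx', hne⟩ := Finset.one_lt_card.mp
            (lt_of_lt_of_le (by omega : 1 < t0) hcard)
          have hf := hpackS x hx x' hx' hne
          have hh := cdist_le_half' x x'
          omega
        have hpb := packing_bound hpm hpackS
        have h8 : t0*(p+1) ≤ S.card*(p+1) := Nat.mul_le_mul_right _ hcard
        omega
      rw [hγm]
      exact (ENat.top_mul (dpdn_ne_zero (0 : Fin n))).symm
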